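/- Let G be a connected graph on n ≥ 2 vertices, let φ be a multicommodity flow on G sending at least one unit of flow between every pair of distinct vertices, and let (A,B,S) be a vertex cut of G. Then max_{v∈V} cong(v) ≥ (|A|·|B| + (1/2)|S|(n-1)) / |S| ≥ (1/4)·|A∪S|·|B∪S| / |S|. Consequently vcong(G) ≥ 1/(4·vspars(G)). -/

import Mathlib

open Finset

variable {V : Type*} [Fintype V] [DecidableEq V] [LinearOrder V]

/-- The congestion of a vertex `w` under a multicommodity flow `φ` (assigning a nonnegative
value to each path of `G`; pairs of vertices are represented by ordered pairs `u < v`):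
each path through `w` contributes `φ(P)` if `w` is interior, and `φ(P)/2` if `w` is an
endpoint. -/
noncomputable def vertexCong (G : SimpleGraph V) [DecidableRel G.Adj]
    (φ : ∀ u v : V, G.Path u v → ℝ) (w : V) : ℝ :=
  ∑ p ∈ Finset.univ.filter (fun p : V × V => p.1 < p.2),
    ∑ P : G.Path p.1 p.2,
      (if w ∈ (P : G.Walk p.1 p.2).support then
        (if w = p.1 ∨ w = p.2 then (1 : ℝ) / 2 else 1) else 0) * φ p.1 p.2 P

/-- `φ` is a multicommodity flow sending at least one unit of flow between every pair of
distinct vertices. -/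
def IsUnitFlow (G : SimpleGraph V) [DecidableRel G.Adj]
    (φ : ∀ u v : V, G.Path u v → ℝ) : Prop :=
  (∀ u v (P : G.Path u v), 0 ≤ φ u v P) ∧
  (∀ u v : V, u < v → 1 ≤ ∑ P : G.Path u v, φ u v P)

/-- `(A,B,S)` is a vertex cut of `G`: a partition of the vertices with `A`, `B` nonempty
and no edges between `A` and `B`. -/
def IsVertexCut (G : SimpleGraph V) (A B S : Finset V) : Prop :=
  A.Nonempty ∧ B.Nonempty ∧ Disjoint A B ∧ Disjoint A S ∧ Disjoint B S ∧
    A ∪ B ∪ S = Finset.univ ∧ ∀ a ∈ A, ∀ b ∈ B, ¬ G.Adj a b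

/-- The vertex sparsity of `G`: the infimum of `|S|/(|A∪S|·|B∪S|)` over vertex cuts. -/
noncomputable def vertexSparsity (G : SimpleGraph V) : ℝ :=
  sInf {r : ℝ | ∃ A B S : Finset V, IsVertexCut G A B S ∧
    r = (S.card : ℝ) / (((A ∪ S).card : ℝ) * ((B ∪ S).card : ℝ))}

/-- The vertex congestion of `G`: the infimum over unit multicommodity flows `φ` of the
maximum vertex congestion under `φ`. -/
noncomputable def vertexCongG (G : SimpleGraph V) [DecidableRel G.Adj] : ℝ :=
  sInf {r : ℝ | ∃ φ : ∀ u v : V, G.Path u v → ℝ, IsUnitFlow G φ ∧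
    r = sSup {x : ℝ | ∃ w : V, x = vertexCong G φ w}}



/-! Every walk from `A` to `B` passes through `S`, and a path ending in `S` loads that endpoint
with `1/2`. So each unit of flow between `u` and `v` puts at least `cutDemand` on `S`; summed
over all pairs this is `|A||B| + ½|S|(n-1)`, and some vertex of `S` carries a `1/|S|` share of
it. The second inequality is elementary algebra with `n = |A| + |B| + |S|`, and the bound on
`vertexCongG` follows by applying the first two to a cut attaining the sparsity. -/

open SimpleGraph

theorem Finset.sum_filter_lt_add_swap {α M : Type*} [Fintype α] [LinearOrder α]
    [AddCommMonoid M] (f : α × α → M) :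
    ∑ p ∈ univ.filter (fun p : α × α => p.1 < p.2), (f p + f p.swap) + ∑ a, f (a, a)
      = ∑ p, f p := by
  have hswap : ∑ p : α × α, (if p.1 < p.2 then f p.swap else 0)
      = ∑ p : α × α, (if p.2 < p.1 then f p else 0) :=
    Fintype.sum_equiv (Equiv.prodComm α α) _ _ (fun _ => rfl)
  have hdiag : ∑ p : α × α, (if p.1 = p.2 then f p else 0) = ∑ a, f (a, a) := by
    rw [Fintype.sum_prod_type]
    exact Finset.sum_congr rfl fun a _ => by simp
  have htri : ∀ p : α × α, f p
      = ((if p.1 < p.2 then f p else 0) + if p.2 < p.1 then f p else 0)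
        + if p.1 = p.2 then f p else 0 := by
    intro p
    rcases lt_trichotomy p.1 p.2 with h | h | h
    · simp [h, h.ne, h.not_gt]
    · simp [h]
    · simp [h, h.ne', h.not_gt]
  rw [Finset.sum_filter, Finset.sum_congr rfl (fun p _ => htri p)]
  simp only [Finset.sum_add_distrib, ← hswap, ← hdiag, ite_add_zero]

theorem le_sum_mul_of_one_le_sum {ι : Type*} {s : Finset ι} {c f : ι → ℝ} {d : ℝ}
    (hd : 0 ≤ d) (hf : ∀ i ∈ s, 0 ≤ f i) (hmass : 1 ≤ ∑ i ∈ s, f i) (hc : ∀ i ∈ s, d ≤ c i) :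
    d ≤ ∑ i ∈ s, c i * f i :=
  calc d ≤ d * ∑ i ∈ s, f i := le_mul_of_one_le_right hd hmass
    _ = ∑ i ∈ s, d * f i := Finset.mul_sum _ _ _
    _ ≤ ∑ i ∈ s, c i * f i :=
        Finset.sum_le_sum fun i hi => mul_le_mul_of_nonneg_right (hc i hi) (hf i hi)

namespace SimpleGraph.Walk

variable {α : Type*} [DecidableEq α] {G : SimpleGraph α} {u v : α}

/-- The coefficient `c_P(w)` of `vertexCong`. -/
noncomputable def congCoeff (p : G.Walk u v) (w : α) : ℝ :=
  if w ∈ p.support then (if w = u ∨ w = v then 1 / 2 else 1) else 0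

theorem congCoeff_nonneg (p : G.Walk u v) (w : α) : 0 ≤ p.congCoeff w := by
  unfold congCoeff; split_ifs <;> norm_num

theorem congCoeff_reverse (p : G.Walk u v) (w : α) : p.reverse.congCoeff w = p.congCoeff w := by
  simp [congCoeff, or_comm]

theorem endpoint_le_congCoeff (p : G.Walk u v) (huv : u ≠ v) (w : α) :
    ((if w = u then 1 / 2 else 0) + if w = v then 1 / 2 else 0) ≤ p.congCoeff w := by
  unfold congCoeff
  split_ifs <;> simp_all

end SimpleGraph.Walk

/-- Lower bound on what one unit of flow from `u` to `v` must load onto the separator: a full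
unit if it crosses from `A` to `B`, and `1/2` for its endpoint `u` if `u ∈ S`. -/
noncomputable def cutDemand {α : Type*} [DecidableEq α] (A B S : Finset α) (u v : α) : ℝ :=
  (if u ∈ A ∧ v ∈ B then 1 else 0) + if u ∈ S then 1 / 2 else 0

theorem cutDemand_nonneg {α : Type*} [DecidableEq α] (A B S : Finset α) (u v : α) :
    0 ≤ cutDemand A B S u v := by
  unfold cutDemand; split_ifs <;> norm_num

section Cut

variable {α : Type*} [Fintype α] [DecidableEq α] {G : SimpleGraph α} {A B S : Finset α}

theorem IsVertexCut.exists_mem_support (hcut : IsVertexCut G A B S) {a b : α} (p : G.Walk a b)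
    (ha : a ∈ A) (hb : b ∈ B) : ∃ w ∈ S, w ∈ p.support := by
  obtain ⟨-, -, hAB, -, -, hcover, hnadj⟩ := hcut
  obtain ⟨d, hd, hd₁, hd₂⟩ :=
    p.exists_boundary_dart (A : Set α) ha (Finset.disjoint_right.mp hAB hb)
  refine ⟨d.snd, ?_, p.dart_snd_mem_support_of_mem_darts hd⟩
  have := hcover ▸ Finset.mem_univ d.snd
  simp only [Finset.mem_union] at this
  exact this.resolve_left (by rintro (h | h); exacts [hd₂ h, hnadj _ hd₁ _ h d.adj])

theorem IsVertexCut.separator_nonempty (hcut : IsVertexCut G A B S) (hconn : G.Connected) :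
    S.Nonempty := by
  obtain ⟨a, ha⟩ := hcut.1
  obtain ⟨b, hb⟩ := hcut.2.1
  obtain ⟨w, hw, -⟩ := hcut.exists_mem_support (hconn.preconnected a b).some ha hb
  exact ⟨w, hw⟩

theorem IsVertexCut.cutDemand_add_le_of_mem (hcut : IsVertexCut G A B S) {u v : α}
    (p : G.Walk u v) (hu : u ∈ A) (hv : v ∈ B) :
    cutDemand A B S u v + cutDemand A B S v u ≤ ∑ w ∈ S, p.congCoeff w := by
  obtain ⟨w, hwS, hw⟩ := hcut.exists_mem_support p hu hv
  obtain ⟨-, -, hAB, hAS, hBS, -, -⟩ := hcut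
  have huS : u ∉ S := Finset.disjoint_left.mp hAS hu
  have hvS : v ∉ S := Finset.disjoint_left.mp hBS hv
  have hvA : v ∉ A := Finset.disjoint_right.mp hAB hv
  have hcoeff : p.congCoeff w = 1 := by
    simp [Walk.congCoeff, hw, ne_of_mem_of_not_mem hwS huS, ne_of_mem_of_not_mem hwS hvS]
  simpa [cutDemand, hu, hv, hvA, huS, hvS, hcoeff] using
    Finset.single_le_sum (fun w _ => p.congCoeff_nonneg w) hwS

theorem IsVertexCut.cutDemand_add_le_sum_congCoeff (hcut : IsVertexCut G A B S) {u v : α}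
    (huv : u ≠ v) (p : G.Walk u v) :
    cutDemand A B S u v + cutDemand A B S v u ≤ ∑ w ∈ S, p.congCoeff w := by
  by_cases hcross : u ∈ A ∧ v ∈ B
  · exact hcut.cutDemand_add_le_of_mem p hcross.1 hcross.2
  by_cases hcross' : v ∈ A ∧ u ∈ B
  · simpa only [add_comm, Walk.congCoeff_reverse] using
      hcut.cutDemand_add_le_of_mem p.reverse hcross'.1 hcross'.2
  calc cutDemand A B S u v + cutDemand A B S v u
      = ∑ w ∈ S, ((if w = u then 1 / 2 else 0) + if w = v then 1 / 2 else 0) := by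
        simp [cutDemand, hcross, hcross', Finset.sum_add_distrib, Finset.sum_ite_eq']
    _ ≤ ∑ w ∈ S, p.congCoeff w :=
        Finset.sum_le_sum fun w _ => p.endpoint_le_congCoeff huv w

theorem IsVertexCut.quarter_mul_card_union_div_le (hcut : IsVertexCut G A B S) :
    1 / 4 * (((A ∪ S).card : ℝ) * (B ∪ S).card) / S.card
      ≤ ((A.card : ℝ) * B.card + 1 / 2 * S.card * (Fintype.card α - 1)) / S.card := by
  refine div_le_div_of_nonneg_right ?_ (Nat.cast_nonneg _)
  obtain ⟨hA, hB, hAB, hAS, hBS, hcover, -⟩ := hcut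
  have hcard : Fintype.card α = A.card + B.card + S.card := by
    rw [← Finset.card_univ, ← hcover, Finset.card_union_of_disjoint
      (Finset.disjoint_union_left.mpr ⟨hAS, hBS⟩), Finset.card_union_of_disjoint hAB]
  have ha : (1 : ℝ) ≤ A.card := by exact_mod_cast hA.card_pos
  have hb : (1 : ℝ) ≤ B.card := by exact_mod_cast hB.card_pos
  rw [Finset.card_union_of_disjoint hAS, Finset.card_union_of_disjoint hBS, hcard]
  push_cast
  nlinarith [mul_nonneg (Nat.cast_nonneg S.card : (0 : ℝ) ≤ _) (add_nonneg
    (sub_nonneg.mpr ha) (sub_nonneg.mpr hb))]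

theorem exists_isVertexCut_vertexSparsity_eq (h : ∃ A B S, IsVertexCut G A B S) :
    ∃ A B S, IsVertexCut G A B S ∧
      vertexSparsity G = (S.card : ℝ) / (((A ∪ S).card : ℝ) * ((B ∪ S).card : ℝ)) := by
  obtain ⟨A, B, S, hcut⟩ := h
  refine (Set.Nonempty.csInf_mem ⟨_, A, B, S, hcut, rfl⟩ ?_ : vertexSparsity G ∈ _)
  refine (Set.finite_range fun t : Finset α × Finset α × Finset α =>
    (t.2.2.card : ℝ) / (((t.1 ∪ t.2.2).card : ℝ) * ((t.2.1 ∪ t.2.2).card : ℝ))).subset ?_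
  rintro _ ⟨A, B, S, -, rfl⟩
  exact ⟨(A, B, S), rfl⟩

end Cut

theorem sum_cutDemand {α : Type*} [Fintype α] [DecidableEq α] [LinearOrder α]
    {A B S : Finset α} (hAB : Disjoint A B) :
    ∑ p ∈ univ.filter (fun p : α × α => p.1 < p.2),
        (cutDemand A B S p.1 p.2 + cutDemand A B S p.2 p.1)
      = A.card * B.card + 1 / 2 * S.card * (Fintype.card α - 1) := by
  have htotal := Finset.sum_filter_lt_add_swap (fun p : α × α => cutDemand A B S p.1 p.2)
  have hdiag : ∑ a, cutDemand A B S a a = 1 / 2 * S.card := by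
    have hAB' : ∀ a, ¬(a ∈ A ∧ a ∈ B) := fun a h => Finset.disjoint_left.mp hAB h.1 h.2
    simp [cutDemand, hAB', Finset.sum_ite_mem, mul_comm]
  have hall : ∑ p : α × α, cutDemand A B S p.1 p.2
      = A.card * B.card + 1 / 2 * S.card * Fintype.card α := by
    rw [Fintype.sum_prod_type']
    simp [cutDemand, Finset.sum_add_distrib, ite_and, Finset.sum_ite_irrel, Finset.sum_ite_mem]
    ring
  simp only [Prod.fst_swap, Prod.snd_swap, hdiag, hall] at htotal
  linarith

section Congestion

variable {G : SimpleGraph V} [DecidableRel G.Adj] {φ : ∀ u v : V, G.Path u v → ℝ}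
  {A B S : Finset V}

theorem IsVertexCut.le_sum_vertexCong (hcut : IsVertexCut G A B S) (hφ : IsUnitFlow G φ) :
    (A.card : ℝ) * B.card + 1 / 2 * S.card * (Fintype.card V - 1)
      ≤ ∑ w ∈ S, vertexCong G φ w :=
  calc (A.card : ℝ) * B.card + 1 / 2 * S.card * (Fintype.card V - 1)
      = ∑ p ∈ univ.filter (fun p : V × V => p.1 < p.2),
          (cutDemand A B S p.1 p.2 + cutDemand A B S p.2 p.1) :=
        (sum_cutDemand hcut.2.2.1).symm
    _ ≤ ∑ p ∈ univ.filter (fun p : V × V => p.1 < p.2), ∑ P : G.Path p.1 p.2,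
          (∑ w ∈ S, (P : G.Walk p.1 p.2).congCoeff w) * φ p.1 p.2 P := by
        refine Finset.sum_le_sum fun p hp => le_sum_mul_of_one_le_sum
          (add_nonneg (cutDemand_nonneg ..) (cutDemand_nonneg ..)) (fun P _ => hφ.1 _ _ P)
          (hφ.2 _ _ (Finset.mem_filter.mp hp).2) fun P _ => ?_
        exact hcut.cutDemand_add_le_sum_congCoeff (Finset.mem_filter.mp hp).2.ne _
    _ = ∑ w ∈ S, vertexCong G φ w := by
        simp only [vertexCong, Finset.sum_mul]
        rw [Finset.sum_comm (s := S)]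
        exact Finset.sum_congr rfl fun p _ => Finset.sum_comm

theorem IsVertexCut.exists_le_vertexCong (hcut : IsVertexCut G A B S) (hconn : G.Connected)
    (hφ : IsUnitFlow G φ) :
    ∃ w, ((A.card : ℝ) * B.card + 1 / 2 * S.card * (Fintype.card V - 1)) / S.card
      ≤ vertexCong G φ w := by
  have hS := hcut.separator_nonempty hconn
  have hsum : ∑ _w ∈ S,
      ((A.card : ℝ) * B.card + 1 / 2 * S.card * (Fintype.card V - 1)) / S.card
        ≤ ∑ w ∈ S, vertexCong G φ w := by
    rw [Finset.sum_const, nsmul_eq_mul, mul_div_cancel₀ _ (by exact_mod_cast hS.card_pos.ne')]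
    exact hcut.le_sum_vertexCong hφ
  obtain ⟨w, -, hw⟩ := Finset.exists_le_of_sum_le hS hsum
  exact ⟨w, hw⟩

theorem vertexCong_le_sSup (φ : ∀ u v : V, G.Path u v → ℝ) (w : V) :
    vertexCong G φ w ≤ sSup {x : ℝ | ∃ w : V, x = vertexCong G φ w} :=
  le_csSup ((Set.finite_range (vertexCong G φ)).subset
    (by rintro _ ⟨w, rfl⟩; exact ⟨w, rfl⟩)).bddAbove ⟨w, rfl⟩

theorem le_vertexCongG {c : ℝ} (hφ : IsUnitFlow G φ)
    (hc : ∀ ψ, IsUnitFlow G ψ → ∃ w, c ≤ vertexCong G ψ w) : c ≤ vertexCongG G := by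
  refine le_csInf ⟨_, φ, hφ, rfl⟩ ?_
  rintro _ ⟨ψ, hψ, rfl⟩
  obtain ⟨w, hw⟩ := hc ψ hψ
  exact hw.trans (vertexCong_le_sSup ψ w)

end Congestion

theorem stmt_14_general (G : SimpleGraph V) [DecidableRel G.Adj] (hconn : G.Connected)
    (n : ℕ) (hn : Fintype.card V = n)
    (φ : ∀ u v : V, G.Path u v → ℝ) (hφ : IsUnitFlow G φ)
    (A B S : Finset V) (hcut : IsVertexCut G A B S) :
    (∃ w : V, ((A.card : ℝ) * (B.card : ℝ) + (1 / 2) * (S.card : ℝ) * ((n : ℝ) - 1))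
        / (S.card : ℝ) ≤ vertexCong G φ w) ∧
    (1 / 4) * (((A ∪ S).card : ℝ) * ((B ∪ S).card : ℝ)) / (S.card : ℝ)
        ≤ ((A.card : ℝ) * (B.card : ℝ) + (1 / 2) * (S.card : ℝ) * ((n : ℝ) - 1))
        / (S.card : ℝ) ∧
    1 / (4 * vertexSparsity G) ≤ vertexCongG G := by
  subst hn
  refine ⟨hcut.exists_le_vertexCong hconn hφ, hcut.quarter_mul_card_union_div_le, ?_⟩
  obtain ⟨A₀, B₀, S₀, hcut₀, hσ⟩ := exists_isVertexCut_vertexSparsity_eq ⟨A, B, S, hcut⟩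
  -- also for `S₀ = ∅`, where both sides are `0` by `x / 0 = 0`
  have hσ' : 1 / (4 * vertexSparsity G)
      = 1 / 4 * (((A₀ ∪ S₀).card : ℝ) * (B₀ ∪ S₀).card) / S₀.card := by
    rw [hσ]
    field_simp
  rw [hσ']
  exact le_vertexCongG hφ fun ψ hψ => (hcut₀.exists_le_vertexCong hconn hψ).imp
    fun _ => hcut₀.quarter_mul_card_union_div_le.trans

/-- If `G` is connected on `n ≥ 2` vertices, `φ` sends a unit of flow between every pair of
vertices, and `(A,B,S)` is a vertex cut, then some vertex has congestion at least
`(|A|·|B| + ½|S|(n-1))/|S| ≥ ¼·|A∪S|·|B∪S|/|S|`; consequently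
`vcong(G) ≥ 1/(4·vspars(G))`. -/
theorem stmt_14 (G : SimpleGraph V) [DecidableRel G.Adj] (hconn : G.Connected)
    (n : ℕ) (hn : Fintype.card V = n) (hn2 : 2 ≤ n)
    (φ : ∀ u v : V, G.Path u v → ℝ) (hφ : IsUnitFlow G φ)
    (A B S : Finset V) (hcut : IsVertexCut G A B S) :
    (∃ w : V, ((A.card : ℝ) * (B.card : ℝ) + (1 / 2) * (S.card : ℝ) * ((n : ℝ) - 1))
        / (S.card : ℝ) ≤ vertexCong G φ w) ∧
    (1 / 4) * (((A ∪ S).card : ℝ) * ((B ∪ S).card : ℝ)) / (S.card : ℝ)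
        ≤ ((A.card : ℝ) * (B.card : ℝ) + (1 / 2) * (S.card : ℝ) * ((n : ℝ) - 1))
        / (S.card : ℝ) ∧
    1 / (4 * vertexSparsity G) ≤ vertexCongG G :=
  stmt_14_general G hconn n hn φ hφ A B S hcut
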